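/- Consider the generator (L g)(x) = Σ_j λ_j(x)(g(x+s_j) − g(x)) where each λ_j is a polynomial of degree at most 2 with nonnegative values on ℕ₀^n, and suppose for every j in the set J_bi of indices with deg λ_j = 2 we have s_j ≤ 0 componentwise. Then for every multi-index μ and all x ∈ ℕ₀^n, (L x^μ)(x) ≤ Σ_{j ∉ J_bi} Σ_{i=1}^n μ_i s_{j,i} λ_j(x) x^{μ − e_i} + Σ_{j=1}^r Σ_{ν ≤ μ, |ν| ≥ 2} C(μ,ν) s_j^ν λ_j(x) x^{μ−ν}. -/
import Mathlib


open Finset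


lemma binom_prod (n : ℕ) (x s : Fin n → ℝ) (μ : Fin n → ℕ) :
    (∏ i, (x i + s i) ^ μ i)
      = ∑ ν ∈ Finset.Iic μ,
          (∏ i, ((μ i).choose (ν i) : ℝ)) * (∏ i, s i ^ ν i) * ∏ i, x i ^ (μ i - ν i) := by
  have hset : Fintype.piFinset (fun i => Finset.range (μ i + 1)) = Finset.Iic μ := by
    ext ν
    simp [Fintype.mem_piFinset, Nat.lt_succ_iff, Finset.mem_Iic, Pi.le_def]
  calc (∏ i, (x i + s i) ^ μ i)
      = ∏ i, ∑ k ∈ Finset.range (μ i + 1), s i ^ k * x i ^ (μ i - k) * ((μ i).choose k : ℝ) := by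
        refine Finset.prod_congr rfl fun i _ => ?_
        rw [add_comm]; exact add_pow _ _ _
    _ = ∑ ν ∈ Fintype.piFinset (fun i => Finset.range (μ i + 1)),
          ∏ i, (s i ^ ν i * x i ^ (μ i - ν i) * ((μ i).choose (ν i) : ℝ)) :=
        Finset.prod_univ_sum _ _
    _ = ∑ ν ∈ Finset.Iic μ,
          (∏ i, ((μ i).choose (ν i) : ℝ)) * (∏ i, s i ^ ν i) * ∏ i, x i ^ (μ i - ν i) := by
        rw [hset]
        refine Finset.sum_congr rfl fun ν _ => ?_
        rw [Finset.prod_mul_distrib, Finset.prod_mul_distrib]; ring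

lemma expand_diff (n : ℕ) (x s : Fin n → ℝ) (μ : Fin n → ℕ) :
    (∏ i, (x i + s i) ^ μ i) - ∏ i, x i ^ μ i
      = (∑ i, (μ i : ℝ) * s i * ∏ k, x k ^ (μ k - (if k = i then 1 else 0)))
        + ∑ ν ∈ (Finset.Iic μ).filter (fun ν => 2 ≤ ∑ i, ν i),
            (∏ i, ((μ i).choose (ν i) : ℝ)) * (∏ i, s i ^ ν i) * ∏ i, x i ^ (μ i - ν i) := by
  set f : (Fin n → ℕ) → ℝ := fun ν =>
    (∏ i, ((μ i).choose (ν i) : ℝ)) * (∏ i, s i ^ ν i) * ∏ i, x i ^ (μ i - ν i) with hf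
  have hsplit : ∑ ν ∈ Finset.Iic μ, f ν
      = (∑ ν ∈ (Finset.Iic μ).filter (fun ν => ∑ i, ν i = 0), f ν)
        + (∑ ν ∈ (Finset.Iic μ).filter (fun ν => ∑ i, ν i = 1), f ν)
        + ∑ ν ∈ (Finset.Iic μ).filter (fun ν => 2 ≤ ∑ i, ν i), f ν := by
    rw [← Finset.sum_filter_add_sum_filter_not (Finset.Iic μ) (fun ν => ∑ i, ν i ≤ 1) f]
    congr 1
    · rw [← Finset.sum_filter_add_sum_filter_not
        ((Finset.Iic μ).filter (fun ν => ∑ i, ν i ≤ 1)) (fun ν => ∑ i, ν i = 0) f]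
      rw [Finset.filter_filter, Finset.filter_filter]
      congr 1
      · apply Finset.sum_congr _ (fun _ _ => rfl)
        apply Finset.filter_congr; intro ν _; constructor <;> (intro h; omega)
      · apply Finset.sum_congr _ (fun _ _ => rfl)
        apply Finset.filter_congr; intro ν _; constructor <;> (intro h; omega)
    · apply Finset.sum_congr _ (fun _ _ => rfl)
      apply Finset.filter_congr; intro ν _; constructor <;> (intro h; omega)
  have h0 : (Finset.Iic μ).filter (fun ν => ∑ i, ν i = 0) = {0} := by
    ext ν
    simp only [Finset.mem_filter, Finset.mem_Iic, Finset.mem_singleton,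
      Finset.sum_eq_zero_iff, Finset.mem_univ, true_implies]
    constructor
    · rintro ⟨-, h⟩; funext i; exact h i
    · rintro rfl; exact ⟨fun i => Nat.zero_le _, fun i => rfl⟩
  have hf0 : f 0 = ∏ i, x i ^ μ i := by simp [hf]
  have h1 : (Finset.Iic μ).filter (fun ν => ∑ i, ν i = 1)
      = (Finset.univ.filter (fun i => 1 ≤ μ i)).image
          (fun i => (fun k => if k = i then 1 else 0 : Fin n → ℕ)) := by
    ext ν
    simp only [Finset.mem_filter, Finset.mem_Iic, Finset.mem_image, Finset.mem_univ,
      true_and]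
    constructor
    · rintro ⟨hle, hs⟩
      obtain ⟨i, hi⟩ : ∃ i, ν i ≠ 0 := by
        by_contra h; push_neg at h
        simp [h] at hs
      have hνi : ν i = 1 := by
        have := Finset.single_le_sum (f := ν) (fun k _ => Nat.zero_le _) (Finset.mem_univ i)
        omega
      have hrest : ∀ k, k ≠ i → ν k = 0 := by
        have he : ν i + ∑ k ∈ Finset.univ.erase i, ν k = ∑ k, ν k :=
          Finset.add_sum_erase _ _ (Finset.mem_univ i)
        have : ∑ k ∈ Finset.univ.erase i, ν k = 0 := by omega
        intro k hk
        have := (Finset.sum_eq_zero_iff.mp this) k (Finset.mem_erase.mpr ⟨hk, Finset.mem_univ k⟩)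
        exact this
      refine ⟨i, ?_, ?_⟩
      · have h1 : ν i ≤ μ i := hle i
        omega
      · funext k
        by_cases hk : k = i
        · subst hk; simp [hνi]
        · simp [hk, hrest k hk]
    · rintro ⟨i, hμi, rfl⟩
      constructor
      · intro k; by_cases hk : k = i <;> simp [hk] <;> omega
      · simp
  rw [binom_prod, hsplit, h0, Finset.sum_singleton, hf0, h1, Finset.sum_image ?hinj]
  case hinj =>
    intro a _ b _ hab
    have := congrFun hab a
    simp at this
    by_contra h
    simp [h] at this
  have hEi : ∀ i ∈ Finset.univ.filter (fun i => 1 ≤ μ i),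
      f (fun k => if k = i then 1 else 0)
        = (μ i : ℝ) * s i * ∏ k, x k ^ (μ k - (if k = i then 1 else 0)) := by
    intro i _
    have hc : (∏ k, (((μ k).choose (if k = i then 1 else 0)) : ℝ)) = (μ i : ℝ) := by
      rw [Finset.prod_eq_single_of_mem i (Finset.mem_univ i)]
      · simp
      · intro k _ hk; simp [hk]
    have hs' : (∏ k, s k ^ (if k = i then 1 else 0)) = s i := by
      rw [Finset.prod_eq_single_of_mem i (Finset.mem_univ i)]
      · simp
      · intro k _ hk; simp [hk]
    simp only [hf, hc, hs']
  rw [Finset.sum_congr rfl hEi]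
  rw [Finset.sum_subset (Finset.filter_subset _ _)
    (by intro i _ hi; simp only [Finset.mem_filter, Finset.mem_univ, true_and] at hi
        have : μ i = 0 := by omega
        simp [this])]
  ring

/-- Constructive upper bound on the generator applied to a monomial for elementary
reaction networks: each propensity `λ_j` is a polynomial of degree at most `2` that is
nonnegative on `ℕ₀^n`, and every bimolecular reaction (degree-two propensity) has a
componentwise nonpositive stoichiometric vector.  Then `(L x^μ)(x)` is bounded above by
dropping the first-order bimolecular terms. -/
theorem generator_monomial_upper_bound {n r : ℕ}
    (s : Fin r → Fin n → ℤ) (lamP : Fin r → MvPolynomial (Fin n) ℝ)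
    (hdeg : ∀ j, (lamP j).totalDegree ≤ 2)
    (lam : Fin r → (Fin n → ℕ) → ℝ)
    (hlam : ∀ j x, lam j x = MvPolynomial.eval (fun i => (x i : ℝ)) (lamP j))
    (hpos : ∀ j x, 0 ≤ lam j x)
    (Jbi : Finset (Fin r)) (hJbi : ∀ j, j ∈ Jbi ↔ (lamP j).totalDegree = 2)
    (hstoich : ∀ j ∈ Jbi, ∀ i, s j i ≤ 0)
    (μ : Fin n → ℕ) (x : Fin n → ℕ) :
    (∑ j, lam j x *
        ((∏ i, ((x i : ℝ) + (s j i : ℝ)) ^ μ i) - ∏ i, (x i : ℝ) ^ μ i)) ≤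
      (∑ j ∈ Jbiᶜ, ∑ i, (μ i : ℝ) * (s j i : ℝ) * lam j x *
          ∏ k, (x k : ℝ) ^ (μ k - (if k = i then 1 else 0))) +
        ∑ j, ∑ ν ∈ (Finset.Iic μ).filter (fun ν => 2 ≤ ∑ i, ν i),
          (∏ i, ((μ i).choose (ν i) : ℝ)) * (∏ i, (s j i : ℝ) ^ ν i) * lam j x *
            ∏ i, (x i : ℝ) ^ (μ i - ν i) := by
  set A : Fin r → ℝ := fun j => ∑ i, (μ i : ℝ) * (s j i : ℝ) * lam j x *
      ∏ k, (x k : ℝ) ^ (μ k - (if k = i then 1 else 0)) with hA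
  set B : Fin r → ℝ := fun j => ∑ ν ∈ (Finset.Iic μ).filter (fun ν => 2 ≤ ∑ i, ν i),
      (∏ i, ((μ i).choose (ν i) : ℝ)) * (∏ i, (s j i : ℝ) ^ ν i) * lam j x *
        ∏ i, (x i : ℝ) ^ (μ i - ν i) with hB
  have key : ∀ j, lam j x *
      ((∏ i, ((x i : ℝ) + (s j i : ℝ)) ^ μ i) - ∏ i, (x i : ℝ) ^ μ i) = A j + B j := by
    intro j
    rw [expand_diff n (fun i => (x i : ℝ)) (fun i => (s j i : ℝ)) μ, mul_add,
      Finset.mul_sum, Finset.mul_sum, hA, hB]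
    congr 1
    · exact Finset.sum_congr rfl fun i _ => by ring
    · exact Finset.sum_congr rfl fun ν _ => by ring
  calc (∑ j, lam j x *
        ((∏ i, ((x i : ℝ) + (s j i : ℝ)) ^ μ i) - ∏ i, (x i : ℝ) ^ μ i))
      = ∑ j, (A j + B j) := Finset.sum_congr rfl fun j _ => key j
    _ = (∑ j ∈ Jbiᶜ, A j) + (∑ j ∈ Jbi, A j) + ∑ j, B j := by
        rw [Finset.sum_add_distrib, Finset.sum_compl_add_sum]
    _ ≤ (∑ j ∈ Jbiᶜ, A j) + 0 + ∑ j, B j := by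
        gcongr
        apply Finset.sum_nonpos
        intro j hj
        apply Finset.sum_nonpos
        intro i _
        have h1 : (μ i : ℝ) * (s j i : ℝ) ≤ 0 :=
          mul_nonpos_of_nonneg_of_nonpos (Nat.cast_nonneg _)
            (by exact_mod_cast hstoich j hj i)
        have h2 : (0:ℝ) ≤ lam j x * ∏ k, (x k : ℝ) ^ (μ k - (if k = i then 1 else 0)) :=
          mul_nonneg (hpos j x) (Finset.prod_nonneg fun k _ => pow_nonneg (Nat.cast_nonneg _) _)
        calc (μ i : ℝ) * (s j i : ℝ) * lam j x *
              ∏ k, (x k : ℝ) ^ (μ k - (if k = i then 1 else 0))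
            = ((μ i : ℝ) * (s j i : ℝ)) *
              (lam j x * ∏ k, (x k : ℝ) ^ (μ k - (if k = i then 1 else 0))) := by ring
          _ ≤ 0 := mul_nonpos_of_nonpos_of_nonneg h1 h2
    _ = (∑ j ∈ Jbiᶜ, A j) + ∑ j, B j := by ring
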